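/- If the branching random walk is subcritical (ψ(0) < 0), there exists θ > 0 with ψ(θ) < ∞, the L log L condition holds, and E(Z_1(ℝ) log₊ Z_1(ℝ)) < ∞, then the decoration measure D_∞^θ is almost surely finite: P(D_∞^θ(ℝ) < ∞) = 1. -/

import Mathlib

open MeasureTheory ProbabilityTheory Filter Set
open scoped ENNReal NNReal Topology Classical

noncomputable section

open MeasureTheory ProbabilityTheory Filter Set
open scoped ENNReal NNReal Topology Classical

noncomputable section

abbrev Label := List ℕ

/-- exponential `EReal → ℝ≥0∞` with `exp ⊥ = 0`, `exp ⊤ = ∞`. -/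
def eexp (x : EReal) : ℝ≥0∞ :=
  if x = ⊥ then 0 else if x = ⊤ then ⊤ else ENNReal.ofReal (Real.exp x.toReal)

/-- logarithm `ℝ≥0∞ → EReal`. -/
def elog (y : ℝ≥0∞) : EReal :=
  if y = 0 then ⊥ else if y = ⊤ then ⊤ else ((Real.log y.toReal : ℝ) : EReal)

/-- number of atoms of an extended-real position lying in a real set. -/
def cnt (A : Set ℝ) (x : EReal) : ℝ≥0∞ :=
  Set.indicator (Real.toEReal '' A) (fun _ => (1 : ℝ≥0∞)) x

/-- evaluation of a nonnegative test function at an extended position (dead particles ignored). -/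
def evalTest (φ : ℝ → ℝ) (x : EReal) : ℝ≥0∞ :=
  if x = ⊥ ∨ x = ⊤ then 0 else ENNReal.ofReal (φ x.toReal)

/-- `e^{-x}` for `x : ℝ≥0∞`. -/
def nexp (x : ℝ≥0∞) : ℝ≥0∞ :=
  if x = ⊤ then 0 else ENNReal.ofReal (Real.exp (-x.toReal))

/-- `log₊` on `ℝ≥0∞`. -/
def plog (x : ℝ≥0∞) : ℝ≥0∞ :=
  if x = ⊤ then ⊤ else ENNReal.ofReal (Real.log (max x.toReal 1))

variable {Ω : Type} [MeasurableSpace Ω]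

/-- A branching random walk: i.i.d. displacement point processes indexed by Ulam–Harris labels
(the label of a particle is the list of child indices along its ancestral line, most recent
first); `disp u ω i` is the displacement of the `i`-th child of particle `u`, equal to `⊥`
if this child does not exist. -/
structure BRW (Ω : Type) [MeasurableSpace Ω] (P : Measure Ω) where
  disp : Label → Ω → ℕ → EReal
  meas : ∀ u, Measurable (disp u)
  indep : iIndepFun (m := fun _ => inferInstance) disp P
  ident : ∀ u v, IdentDistrib (disp u) (disp v) P P

namespace BRW

variable {P : Measure Ω}

/-- position `V(u)` of the particle with label `u` (`⊥` if it is dead). -/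
def V (b : BRW Ω P) : Label → Ω → EReal
  | [], _ => 0
  | i :: u, ω => b.V u ω + b.disp u ω i

/-- maximal displacement at generation `n`. -/
def M (b : BRW Ω P) (n : ℕ) (ω : Ω) : EReal :=
  ⨆ u : {u : Label // u.length = n}, b.V u ω

/-- `E (Σ_{|u|=1} e^{θ V(u)})`. -/
def Lap (b : BRW Ω P) (θ : ℝ) : ℝ≥0∞ :=
  ∫⁻ ω, ∑' i : ℕ, (if b.V [i] ω = ⊥ then 0 else eexp ((θ : EReal) * b.V [i] ω)) ∂P

/-- the log-Laplace transform `ψ(θ)`. -/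
def ψe (b : BRW Ω P) (θ : ℝ) : EReal := elog (b.Lap θ)

/-- the Legendre transform `ψ*(x) = sup_{θ ≥ 0} (θ x − ψ(θ))`. -/
def ψStar (b : BRW Ω P) (x : ℝ) : EReal :=
  ⨆ θ : {θ : ℝ // 0 ≤ θ}, ((θ.1 * x : ℝ) : EReal) - b.ψe θ.1

/-- `x* = inf_{θ>0} ψ(θ)/θ`. -/
def xstar (b : BRW Ω P) : EReal :=
  ⨅ θ : {θ : ℝ // 0 < θ}, b.ψe θ.1 * ((θ.1⁻¹ : ℝ) : EReal)

/-- number of particles alive at generation `n`, i.e. `Z_n(ℝ)`. -/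
def ZR (b : BRW Ω P) (n : ℕ) (ω : Ω) : ℝ≥0∞ :=
  ∑' u : {u : Label // u.length = n}, if b.V u ω = ⊥ then 0 else 1

/-- number of particles at generation `n` located in `A`, i.e. `Z_n(A)`. -/
def Zset (b : BRW Ω P) (n : ℕ) (A : Set ℝ) (ω : Ω) : ℝ≥0∞ :=
  ∑' u : {u : Label // u.length = n}, cnt A (b.V u ω)

/-- mass of the extremal process `ℰ_n = Σ_{|u|=n} δ_{V(u)−M_n}` on a set `A`. -/
def Emeas (b : BRW Ω P) (n : ℕ) (ω : Ω) (A : Set ℝ) : ℝ≥0∞ :=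
  ∑' u : {u : Label // u.length = n}, cnt A (b.V u ω - b.M n ω)

/-- `ℰ_n(φ) = Σ_{|u|=n} φ(V(u)−M_n)`. -/
def Etest (b : BRW Ω P) (n : ℕ) (φ : ℝ → ℝ) (ω : Ω) : ℝ≥0∞ :=
  ∑' u : {u : Label // u.length = n}, evalTest φ (b.V u ω - b.M n ω)

/-- `W_1^θ = Σ_{|u|=1} e^{θ V(u)}`. -/
def W1 (b : BRW Ω P) (θ : ℝ) (ω : Ω) : ℝ≥0∞ :=
  ∑' i : ℕ, (if b.V [i] ω = ⊥ then 0 else eexp ((θ : EReal) * b.V [i] ω))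

/-- the `L log L` integrability condition (as3). -/
def LlogL (b : BRW Ω P) (θ : ℝ) : Prop :=
  ∫⁻ ω, b.W1 θ ω * plog (b.W1 θ ω) ∂P < ⊤

/-- the branching random walk is non-lattice (as4). -/
def NonLattice (b : BRW Ω P) : Prop :=
  ∀ c d : ℝ,
    P {ω | ∀ i : ℕ, b.V [i] ω ≠ ⊥ → ∃ k : ℤ, b.V [i] ω = ((c + d * k : ℝ) : EReal)} < 1

/-- `σ² = E (Σ_{|u|=1} (V(u) − ψ'(θ))² e^{θV(u)})` (as2). -/
def VarCond (b : BRW Ω P) (θ ψ' σ2 : ℝ) : Prop :=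
  (∫⁻ ω, ∑' i : ℕ, (if b.V [i] ω = ⊥ then 0 else
      ENNReal.ofReal (((b.V [i] ω).toReal - ψ') ^ 2) * eexp ((θ : EReal) * b.V [i] ω)) ∂P)
    = ENNReal.ofReal σ2

end BRW


/-- index type for the independent ingredients of the spine construction. -/
def SpIdx : Type := ℕ ⊕ (ℕ × ℕ)

def SpType : SpIdx → Type :=
  Sum.elim (fun _ => (ℕ → EReal) × ℕ) (fun _ => Label → EReal)

instance : ∀ i : SpIdx, MeasurableSpace (SpType i) := fun i => by
  cases i with
  | inl k => exact (inferInstance : MeasurableSpace ((ℕ → EReal) × ℕ))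
  | inr p => exact (inferInstance : MeasurableSpace (Label → EReal))

/-- The time-reversed spine construction for a branching random walk:
`B k · i = b_{k+1}(i)` is the displacement point process of the children of the spine at
time `k+1`, `W k = w^{(k+1)}` the spine index, `Vc i k = V^{(i,k+1)}` independent copies of
the branching random walk; `(B k, W k)` has the size-biased law with spine choice, all the
ingredients are independent, and the spine step has mean `ψ' = ψ'(θ)` with
`ψ = ψ(θ) < ∞`. -/
structure SpineSetup (Ω : Type) [MeasurableSpace Ω] (P : Measure Ω) (θ ψ ψ' : ℝ)
    extends BRW Ω P where
  B : ℕ → Ω → ℕ → EReal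
  W : ℕ → Ω → ℕ
  Vc : ℕ → ℕ → Label → Ω → EReal
  lapEq : toBRW.Lap θ = ENNReal.ofReal (Real.exp ψ)
  sbLaw : ∀ k : ℕ, ∀ f : (ℕ → EReal) × ℕ → ℝ≥0∞, Measurable f →
    ∫⁻ ω, f (B k ω, W k ω) ∂P
      = ∫⁻ ω, ∑' i : ℕ, (if toBRW.V [i] ω = ⊥ then 0 else
          eexp ((θ : EReal) * toBRW.V [i] ω - (ψ : EReal)) *
            f (fun j => toBRW.V [j] ω, i)) ∂P
  copyLaw : ∀ i k : ℕ, ∀ f : (Label → EReal) → ℝ≥0∞, Measurable f →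
    ∫⁻ ω, f (fun u => Vc i k u ω) ∂P = ∫⁻ ω, f (fun u => toBRW.V u ω) ∂P
  indepAll : iIndepFun (β := SpType) (m := fun i => inferInstance)
    (fun i => Sum.rec (motive := fun i => Ω → SpType i)
      (fun k ω => (B k ω, W k ω)) (fun p ω u => Vc p.1 p.2 u ω) i) P
  stepInt : Integrable (fun ω => (B 0 ω (W 0 ω)).toReal) P
  stepMean : ∫ ω, (B 0 ω (W 0 ω)).toReal ∂P = ψ'

namespace SpineSetup

variable {P : Measure Ω} {θ ψ ψ' : ℝ}

/-- the spine random walk `S_n = Σ_{k=1}^n b_k(w^{(k)})`. -/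
def S (s : SpineSetup Ω P θ ψ ψ') (n : ℕ) (ω : Ω) : ℝ :=
  ∑ k ∈ Finset.range n, (s.B k ω (s.W k ω)).toReal

/-- the atom `b_{k+1}(i) + V^{(i,k+1)}(u) − S_{k+1}` of the decoration measure. -/
def atom (s : SpineSetup Ω P θ ψ ψ') (k i : ℕ) (u : Label) (ω : Ω) : EReal :=
  s.B k ω i + s.Vc i k u ω - ((s.S (k + 1) ω : ℝ) : EReal)

/-- mass of `D_n^θ` on a set `A ⊆ ℝ`. -/
def Dn (s : SpineSetup Ω P θ ψ ψ') (n : ℕ) (ω : Ω) (A : Set ℝ) : ℝ≥0∞ :=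
  cnt A 0 + ∑ k ∈ Finset.range n, ∑' i : ℕ, ∑' u : {u : Label // u.length = k},
    if i = s.W k ω then 0 else cnt A (s.atom k i u ω)

/-- mass of `D_∞^θ` on a set `A ⊆ ℝ`. -/
def Dinf (s : SpineSetup Ω P θ ψ ψ') (ω : Ω) (A : Set ℝ) : ℝ≥0∞ :=
  cnt A 0 + ∑' k : ℕ, ∑' i : ℕ, ∑' u : {u : Label // u.length = k},
    if i = s.W k ω then 0 else cnt A (s.atom k i u ω)

/-- `D_n^θ(φ)` for a nonnegative test function `φ`. -/
def Dtest (s : SpineSetup Ω P θ ψ ψ') (n : ℕ) (φ : ℝ → ℝ) (ω : Ω) : ℝ≥0∞ :=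
  ENNReal.ofReal (φ 0) + ∑ k ∈ Finset.range n, ∑' i : ℕ, ∑' u : {u : Label // u.length = k},
    if i = s.W k ω then 0 else evalTest φ (s.atom k i u ω)

/-- `D_∞^θ(φ)` for a nonnegative test function `φ`. -/
def DtestInf (s : SpineSetup Ω P θ ψ ψ') (φ : ℝ → ℝ) (ω : Ω) : ℝ≥0∞ :=
  ENNReal.ofReal (φ 0) + ∑' k : ℕ, ∑' i : ℕ, ∑' u : {u : Label // u.length = k},
    if i = s.W k ω then 0 else evalTest φ (s.atom k i u ω)

/-- `C(θ) = E ( (1/D_∞^θ({0})) 1_{D_∞^θ((0,∞)) = 0} )`. -/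
def Cmass (s : SpineSetup Ω P θ ψ ψ') : ℝ≥0∞ :=
  ∫⁻ ω, (if s.Dinf ω (Set.Ioi 0) = 0 then (s.Dinf ω {0})⁻¹ else 0) ∂P

/-- the event `A_{n+1,ε}` of Lemma 2.3. -/
def Aev (s : SpineSetup Ω P θ ψ ψ') (n : ℕ) (ε : ℝ) : Set Ω :=
  {ω | ∀ ℓ, n ≤ ℓ →
    (⨆ k : ℕ, (s.B ℓ ω k + ⨆ u : {u : Label // u.length = ℓ}, s.Vc k ℓ u ω))
      - ((s.S (ℓ + 1) ω : ℝ) : EReal) < ((-ε * (ℓ + 1) : ℝ) : EReal)}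

end SpineSetup

/-!
Bound `D_∞^θ(ℝ) ≤ 1 + Σ_k Σ_i 1{b_{k+1}(i) alive} Z_k^{(i,k+1)}`, where `Z_k^{(i,k+1)}` is the
generation-`k` population of the copy attached to the sibling `i` of the spine. Pick `r > 1` with
`r E Z_1(ℝ) < 1`. The `k`-th term vanishes unless either the spine has more than `r^k` children at
step `k + 1`, or it has at most `r^k` children and the copy of one of them survives to generation
`k`. Under the size-biased law `log₊` of the family size is integrable, so the first events have
summable probabilities; by independence and `P(Z_k ≠ 0) ≤ (E Z_1(ℝ))^k` the second ones have
probability at most `(r E Z_1(ℝ))^k`. By Borel–Cantelli only finitely many terms are nonzero, and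
each is a.s. finite.

The spine ingredients are not assumed measurable, so their events are estimated through outer
measures.
-/

section Counting

variable {ι : Type*}

def aliveIndicator (x : EReal) : ℝ≥0∞ := if x = ⊥ then 0 else 1

def numAlive (g : ι → EReal) : ℝ≥0∞ := ∑' i, aliveIndicator (g i)

lemma measurable_aliveIndicator : Measurable aliveIndicator :=
  Measurable.ite (measurableSet_singleton _) measurable_const measurable_const

lemma measurable_numAlive [Countable ι] : Measurable (numAlive (ι := ι)) :=
  Measurable.tsum fun i => measurable_aliveIndicator.comp (measurable_pi_apply i)

lemma aliveIndicator_le_one (x : EReal) : aliveIndicator x ≤ 1 := by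
  unfold aliveIndicator; split <;> simp

lemma one_le_numAlive_of_ne_zero {g : ι → EReal} (h : numAlive g ≠ 0) : 1 ≤ numAlive g := by
  obtain ⟨i, hi⟩ : ∃ i, aliveIndicator (g i) ≠ 0 := by
    by_contra! h'
    exact h (ENNReal.tsum_eq_zero.2 h')
  calc (1 : ℝ≥0∞) = aliveIndicator (g i) := by unfold aliveIndicator at hi ⊢; simp_all
    _ ≤ numAlive g := ENNReal.le_tsum i

lemma finite_alive_of_numAlive_ne_top {g : ι → EReal} (h : numAlive g ≠ ⊤) :
    {i | g i ≠ ⊥}.Finite := by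
  refine (ENNReal.finite_const_le_of_tsum_ne_top h one_ne_zero).subset fun i hi => ?_
  simp [aliveIndicator, hi.out]

lemma tsum_indicator_alive_le (a : ℝ≥0∞) (g : ι → EReal) :
    ∑' i, {g : ι → EReal | numAlive g ≤ a ∧ g i ≠ ⊥}.indicator 1 g ≤ a := by
  by_cases hg : numAlive g ≤ a
  · refine le_trans (ENNReal.tsum_le_tsum fun i => ?_) hg
    by_cases hi : g i = ⊥ <;> simp [hi, hg, aliveIndicator]
  · simp [hg]

lemma cnt_univ_add_sub_le (x y : EReal) (z : ℝ) :
    cnt univ (x + y - z) ≤ aliveIndicator x * aliveIndicator y := by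
  by_cases h : x = ⊥ ∨ y = ⊥
  · have hxy : x + y - z = ⊥ := by
      rw [← EReal.add_eq_bot_iff] at h
      rw [h, EReal.bot_sub]
    simp [cnt, hxy]
  · push Not at h
    rw [aliveIndicator, aliveIndicator, if_neg h.1, if_neg h.2, mul_one]
    exact indicator_le_self _ _ _

lemma tsum_measure_alive_le [Countable ι] (μ : Measure (ι → EReal)) (a : ℝ≥0∞) :
    ∑' i, μ {g | numAlive g ≤ a ∧ g i ≠ ⊥} ≤ a * μ univ := by
  have hS : ∀ i, MeasurableSet {g : ι → EReal | numAlive g ≤ a ∧ g i ≠ ⊥} := fun i =>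
    (measurableSet_le measurable_numAlive measurable_const).inter
      ((measurable_pi_apply i) (measurableSet_singleton ⊥)).compl
  simp only [← lintegral_indicator_one (hS _)]
  rw [← lintegral_tsum fun i => (measurable_one.indicator (hS i)).aemeasurable, ← lintegral_const]
  exact lintegral_mono (tsum_indicator_alive_le a)

end Counting

lemma ENNReal.tsum_ne_top_of_support_finite {ι : Type*} {f : ι → ℝ≥0∞}
    (hfin : (Function.support f).Finite) (hf : ∀ i, f i ≠ ⊤) : ∑' i, f i ≠ ⊤ := by
  rw [tsum_eq_sum' hfin.coe_toFinset.ge]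
  exact ENNReal.sum_ne_top.2 fun i _ => hf i

section ExpLog

lemma measurable_plog : Measurable plog :=
  Measurable.ite (measurableSet_singleton ⊤) measurable_const
    ((ENNReal.measurable_toReal.max measurable_const).log).ennreal_ofReal

lemma Real.mul_log_max_one_le {a b : ℝ} (ha : 0 ≤ a) (hb : 0 ≤ b) :
    a * Real.log (max b 1) ≤ a * Real.log (max a 1) + b := by
  rcases le_or_gt (max b 1) (max a 1) with h | h
  · nlinarith [mul_le_mul_of_nonneg_left (Real.log_le_log (by positivity) h) ha]
  have hb1 : 1 < b := by simpa using h.trans_le' (le_max_right a 1)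
  rw [max_eq_left hb1.le] at h ⊢
  rcases le_or_gt a 1 with ha1 | ha1
  · have := Real.log_le_sub_one_of_pos (zero_lt_one.trans hb1)
    nlinarith [Real.log_nonneg hb1.le, Real.log_nonneg (le_max_right a 1)]
  -- `log b = log a + log (b / a)` and `a log (b / a) ≤ a (b / a - 1) ≤ b`
  rw [max_eq_left ha1.le] at h ⊢
  have hlog : Real.log b = Real.log a + Real.log (b / a) := by
    rw [Real.log_div (by positivity) (by positivity)]; ring
  have := mul_le_mul_of_nonneg_left (Real.log_le_sub_one_of_pos (by positivity : 0 < b / a)) ha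
  rw [mul_sub, mul_div_cancel₀ _ (by positivity)] at this
  rw [hlog]; nlinarith

lemma mul_plog_le (a b : ℝ≥0∞) : a * plog b ≤ a * plog a + b := by
  rcases eq_or_ne b ⊤ with rfl | hb
  · simp
  rcases eq_or_ne a ⊤ with rfl | ha
  · simp [plog]
  rw [plog, plog, if_neg hb, if_neg ha, ← ENNReal.ofReal_toReal ha, ← ENNReal.ofReal_toReal hb,
    ← ENNReal.ofReal_mul ENNReal.toReal_nonneg, ← ENNReal.ofReal_mul ENNReal.toReal_nonneg,
    ← ENNReal.ofReal_add (mul_nonneg ENNReal.toReal_nonneg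
      (Real.log_nonneg (le_max_right _ _))) ENNReal.toReal_nonneg]
  simpa using ENNReal.ofReal_le_ofReal
    (Real.mul_log_max_one_le (a := a.toReal) (b := b.toReal) (by positivity) (by positivity))

/-- Counting the `k` with `r ^ k < z` is counting `k < log z / log r`. -/
lemma tsum_indicator_pow_lt_le {r : ℝ} (hr : 1 < r) (z : ℝ≥0∞) :
    ∑' k : ℕ, {z : ℝ≥0∞ | ENNReal.ofReal (r ^ k) < z}.indicator 1 z
      ≤ ENNReal.ofReal (Real.log r)⁻¹ * plog z + 1 := by
  have hlogr : 0 < Real.log r := Real.log_pos hr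
  rcases eq_or_ne z ⊤ with rfl | hz
  · simp [plog, ENNReal.mul_top, hlogr]
  set n := ⌊Real.log (max z.toReal 1) / Real.log r⌋₊
  have hsupp : ∀ k, ENNReal.ofReal (r ^ k) < z → k < n + 1 := by
    intro k hk
    have hk' : r ^ k < max z.toReal 1 :=
      ((ENNReal.ofReal_lt_iff_lt_toReal (by positivity) hz).1 hk).trans_le (le_max_left _ _)
    refine Nat.lt_succ_of_le (Nat.le_floor ?_)
    rw [le_div_iff₀ hlogr, ← Real.log_pow]
    exact Real.log_le_log (by positivity) hk'.le
  calc ∑' k : ℕ, {z : ℝ≥0∞ | ENNReal.ofReal (r ^ k) < z}.indicator 1 z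
      = ∑ k ∈ Finset.range (n + 1), {z : ℝ≥0∞ | ENNReal.ofReal (r ^ k) < z}.indicator 1 z :=
        tsum_eq_sum fun k hk =>
          indicator_of_notMem (s := {z : ℝ≥0∞ | ENNReal.ofReal (r ^ k) < z})
            (fun h => hk (Finset.mem_range.2 (hsupp k h))) _
    _ ≤ ∑ _k ∈ Finset.range (n + 1), (1 : ℝ≥0∞) :=
        Finset.sum_le_sum fun k _ => indicator_le_self _ _ z
    _ = ENNReal.ofReal n + 1 := by simp
    _ ≤ ENNReal.ofReal (Real.log r)⁻¹ * plog z + 1 := by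
        rw [plog, if_neg hz, ← ENNReal.ofReal_mul (by positivity), inv_mul_eq_div]
        gcongr
        exact Nat.floor_le (div_nonneg (Real.log_nonneg (le_max_right _ _)) hlogr.le)

lemma measurable_eexp : Measurable eexp :=
  Measurable.ite (measurableSet_singleton ⊥) measurable_const
    (Measurable.ite (measurableSet_singleton ⊤) measurable_const
      measurable_ereal_toReal.exp.ennreal_ofReal)

lemma eexp_sub_coe (x : EReal) (c : ℝ) :
    eexp (x - c) = eexp x * ENNReal.ofReal (Real.exp (-c)) := by
  induction x using EReal.rec with
  | bot => simp [eexp, EReal.bot_sub]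
  | coe y =>
    rw [← EReal.coe_sub]
    simp only [eexp, EReal.coe_ne_bot, EReal.coe_ne_top, if_false, EReal.toReal_coe]
    rw [← ENNReal.ofReal_mul (Real.exp_nonneg _), ← Real.exp_add, sub_eq_add_neg]
  | top => simp [eexp, Real.exp_pos]

end ExpLog

section Measure

variable {α β : Type*} [MeasurableSpace α] [MeasurableSpace β]

lemma tsum_measure_pow_lt_ne_top (μ : Measure α) [IsFiniteMeasure μ] {f : α → ℝ≥0∞}
    (hf : Measurable f) (hlog : ∫⁻ x, plog (f x) ∂μ ≠ ⊤) {r : ℝ} (hr : 1 < r) :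
    ∑' k : ℕ, μ {x | ENNReal.ofReal (r ^ k) < f x} ≠ ⊤ := by
  refine ne_top_of_le_ne_top (b := ENNReal.ofReal (Real.log r)⁻¹ * ∫⁻ x, plog (f x) ∂μ + μ univ)
    (by finiteness) ?_
  have hmeas : ∀ k : ℕ, MeasurableSet {z : ℝ≥0∞ | ENNReal.ofReal (r ^ k) < z} :=
    fun k => measurableSet_lt measurable_const measurable_id
  have hind : ∀ k : ℕ, Measurable fun x =>
      {z : ℝ≥0∞ | ENNReal.ofReal (r ^ k) < z}.indicator (1 : ℝ≥0∞ → ℝ≥0∞) (f x) :=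
    fun k => (measurable_one.indicator (hmeas k)).comp hf
  have hplog : Measurable fun x => plog (f x) := measurable_plog.comp hf
  calc ∑' k : ℕ, μ {x | ENNReal.ofReal (r ^ k) < f x}
      = ∫⁻ x, ∑' k : ℕ, {z : ℝ≥0∞ | ENNReal.ofReal (r ^ k) < z}.indicator 1 (f x) ∂μ := by
        rw [lintegral_tsum fun k => (hind k).aemeasurable]
        refine tsum_congr fun k => ?_
        exact (lintegral_indicator_one (hf (hmeas k))).symm
    _ ≤ ∫⁻ x, ENNReal.ofReal (Real.log r)⁻¹ * plog (f x) + 1 ∂μ :=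
        lintegral_mono fun x => tsum_indicator_pow_lt_le hr (f x)
    _ = ENNReal.ofReal (Real.log r)⁻¹ * ∫⁻ x, plog (f x) ∂μ + μ univ := by
        rw [lintegral_add_right _ measurable_const, lintegral_const_mul _ hplog,
          lintegral_const, one_mul]

/-- For non-measurable `A` the integral is the inner measure of `Aᶜ`. -/
lemma measure_add_lintegral_indicator_compl_le (P : Measure α) [IsProbabilityMeasure P]
    (A : Set α) : P A + ∫⁻ ω, Aᶜ.indicator 1 ω ∂P ≤ 1 := by
  obtain ⟨g, hgm, hg, hgeq⟩ := exists_measurable_le_lintegral_eq P (Aᶜ.indicator 1)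
  have hS : MeasurableSet {ω | g ω = 0} := hgm (measurableSet_singleton 0)
  have hAS : A ⊆ {ω | g ω = 0} := fun ω hω =>
    le_antisymm ((hg ω).trans_eq (indicator_of_notMem (notMem_compl_iff.2 hω) _)) bot_le
  have hgS : ∫⁻ ω, g ω ∂P ≤ P {ω | g ω = 0}ᶜ := by
    rw [← lintegral_indicator_one hS.compl]
    refine lintegral_mono fun ω => ?_
    by_cases h : g ω = 0
    · simp [h]
    · rw [indicator_of_mem (show ω ∈ {ω | g ω = 0}ᶜ from h)]
      exact (hg ω).trans (indicator_le_self _ _ ω)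
  calc P A + ∫⁻ ω, Aᶜ.indicator 1 ω ∂P ≤ P {ω | g ω = 0} + P {ω | g ω = 0}ᶜ := by
        rw [hgeq]; exact add_le_add (measure_mono hAS) hgS
    _ = 1 := by rw [measure_add_measure_compl hS, measure_univ]

/-- `X` need not be measurable, in which case `P (X ⁻¹' t)` is an outer measure. -/
lemma measure_preimage_le_of_lintegral_comp_eq {P : Measure α} [IsProbabilityMeasure P]
    {X : α → β} (ν : Measure β) [IsProbabilityMeasure ν]
    (hX : ∀ f : β → ℝ≥0∞, Measurable f → ∫⁻ ω, f (X ω) ∂P = ∫⁻ y, f y ∂ν)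
    {t : Set β} (ht : MeasurableSet t) : P (X ⁻¹' t) ≤ ν t := by
  have hcompl : ∫⁻ ω, (X ⁻¹' t)ᶜ.indicator 1 ω ∂P = ν tᶜ := by
    rw [← lintegral_indicator_one ht.compl, ← hX _ (measurable_one.indicator ht.compl)]
    rfl
  have h := measure_add_lintegral_indicator_compl_le P (X ⁻¹' t)
  rw [hcompl, ← prob_add_prob_compl (μ := ν) ht] at h
  exact (ENNReal.add_le_add_iff_right (measure_ne_top ν _)).1 h

lemma exists_one_lt_ofReal_mul_lt_one {m : ℝ≥0∞} (hm : m < 1) :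
    ∃ r : ℝ, 1 < r ∧ ENNReal.ofReal r * m < 1 := by
  obtain ⟨c, -, hmc, hc1⟩ := ENNReal.lt_iff_exists_real_btwn.1 hm
  have hc0 : 0 < c := ENNReal.ofReal_pos.1 (hmc.trans_le' bot_le)
  have hc1' : c < 1 := by simpa using hc1
  refine ⟨c⁻¹, (one_lt_inv₀ hc0).2 hc1', ?_⟩
  calc ENNReal.ofReal c⁻¹ * m < ENNReal.ofReal c⁻¹ * ENNReal.ofReal c :=
        by gcongr; simp [hc0]
    _ = 1 := by
        rw [← ENNReal.ofReal_mul (by positivity), inv_mul_cancel₀ hc0.ne', ENNReal.ofReal_one]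

end Measure

namespace BRW

variable {P : Measure Ω} (b : BRW Ω P)

lemma measurable_V : ∀ u : Label, Measurable (b.V u)
  | [] => measurable_const
  | i :: u => (measurable_V u).add ((measurable_pi_apply i).comp (b.meas u))

lemma ZR_eq_numAlive (n : ℕ) (ω : Ω) :
    b.ZR n ω = numAlive fun u : {u : Label // u.length = n} => b.V u ω := rfl

lemma measurable_ZR (n : ℕ) : Measurable (b.ZR n) :=
  measurable_numAlive.comp (measurable_pi_lambda _ fun u => b.measurable_V u.1)

def ancestors (v : Label) : Finset Label := v.tails.toFinset.erase v

lemma ancestors_cons (i : ℕ) (v : Label) : ancestors (i :: v) = v.tails.toFinset := by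
  rw [ancestors, List.tails_cons, List.toFinset_cons, Finset.erase_insert]
  simp only [List.mem_toFinset, List.mem_tails]
  exact fun h => by simpa using h.length_le

lemma exists_measurable_V_eq_comp : ∀ v : Label,
    ∃ g : ((w : ancestors v) → ℕ → EReal) → EReal,
      Measurable g ∧ ∀ ω, b.V v ω = g fun w => b.disp w.1 ω
  | [] => ⟨fun _ => 0, measurable_const, fun _ => rfl⟩
  | i :: v => by
      obtain ⟨g, hg, hV⟩ := exists_measurable_V_eq_comp v
      have hsub : ∀ w ∈ ancestors v, w ∈ ancestors (i :: v) := fun w hw => by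
        rw [ancestors_cons]; exact Finset.mem_of_mem_erase hw
      have hv : v ∈ ancestors (i :: v) := by simp [ancestors_cons]
      refine ⟨fun x => g (fun w => x ⟨w.1, hsub w.1 w.2⟩) + x ⟨v, hv⟩ i, ?_, fun ω => ?_⟩
      · exact (hg.comp (measurable_pi_lambda _ fun w => measurable_pi_apply _)).add
          ((measurable_pi_apply i).comp (measurable_pi_apply _))
      · simp only [V, hV ω]

lemma indepFun_V_disp (v : Label) : IndepFun (b.V v) (b.disp v) P := by
  obtain ⟨g, hg, hV⟩ := b.exists_measurable_V_eq_comp v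
  have hdisj : Disjoint (ancestors v) {v} :=
    Finset.disjoint_singleton_right.2 (Finset.notMem_erase _ _)
  rw [funext hV]
  exact (b.indep.indepFun_finset _ _ hdisj b.meas).comp hg
    (measurable_pi_apply ⟨v, Finset.mem_singleton_self v⟩)

lemma aliveIndicator_V_cons (i : ℕ) (v : Label) (ω : Ω) :
    aliveIndicator (b.V (i :: v) ω) = aliveIndicator (b.V v ω) * aliveIndicator (b.disp v ω i) := by
  simp only [V, aliveIndicator, EReal.add_eq_bot_iff]
  by_cases h₁ : b.V v ω = ⊥ <;> by_cases h₂ : b.disp v ω i = ⊥ <;> simp [h₁, h₂]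

lemma ZR_succ (n : ℕ) (ω : Ω) :
    b.ZR (n + 1) ω = ∑' v : {v : Label // v.length = n},
      aliveIndicator (b.V v ω) * numAlive (b.disp v ω) := by
  let e : {v : Label // v.length = n} × ℕ ≃ {u : Label // u.length = n + 1} :=
    { toFun := fun p => ⟨p.2 :: p.1.1, by simp [p.1.2]⟩
      invFun := fun u => (⟨u.1.tail, by simp [u.2]⟩, u.1.headI)
      left_inv := fun _ => rfl
      right_inv := by
        rintro ⟨_ | ⟨a, t⟩, hu⟩
        · simp at hu
        · rfl }
  rw [ZR_eq_numAlive, numAlive, ← e.tsum_eq]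
  refine (ENNReal.tsum_prod (f := fun (v : {v : Label // v.length = n}) i =>
    aliveIndicator (b.V (i :: v.1) ω))).trans (tsum_congr fun v => ?_)
  rw [numAlive, ← ENNReal.tsum_mul_left]
  exact tsum_congr fun i => b.aliveIndicator_V_cons i v ω

lemma firstGen_eq_disp_nil (ω : Ω) : (fun j => b.V [j] ω) = b.disp [] ω := by
  funext j; simp [V]

lemma ZR_one (ω : Ω) : b.ZR 1 ω = numAlive fun j => b.V [j] ω := by
  rw [ZR_eq_numAlive, numAlive, numAlive]
  let e : ℕ ≃ {u : Label // u.length = 1} :=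
    { toFun := fun i => ⟨[i], rfl⟩
      invFun := fun u => u.1.headI
      left_inv := fun _ => rfl
      right_inv := by
        rintro ⟨_ | ⟨a, _ | ⟨c, t⟩⟩, hu⟩ <;> simp at hu ⊢ }
  exact (e.tsum_eq fun u => aliveIndicator (b.V u ω)).symm

lemma lintegral_numAlive_disp (v : Label) :
    ∫⁻ ω, numAlive (b.disp v ω) ∂P = ∫⁻ ω, b.ZR 1 ω ∂P := by
  calc ∫⁻ ω, numAlive (b.disp v ω) ∂P = ∫⁻ ω, numAlive (b.disp [] ω) ∂P :=
        ((b.ident v []).comp measurable_numAlive).lintegral_eq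
    _ = ∫⁻ ω, b.ZR 1 ω ∂P := by simp only [ZR_one, firstGen_eq_disp_nil]

lemma ZR_zero (ω : Ω) : b.ZR 0 ω = 1 := by
  rw [ZR_eq_numAlive, numAlive, tsum_eq_single (⟨[], rfl⟩ : {u : Label // u.length = 0})
    fun u hu => absurd (Subtype.ext (List.length_eq_zero_iff.1 u.2)) hu]
  simp [aliveIndicator, V]

lemma lintegral_ZR [IsProbabilityMeasure P] (n : ℕ) :
    ∫⁻ ω, b.ZR n ω ∂P = (∫⁻ ω, b.ZR 1 ω ∂P) ^ n := by
  induction n with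
  | zero => simp [ZR_zero]
  | succ n ih =>
    have hV : ∀ v : Label, Measurable fun ω => aliveIndicator (b.V v ω) :=
      fun v => measurable_aliveIndicator.comp (b.measurable_V v)
    have hN : ∀ v : Label, Measurable fun ω => numAlive (b.disp v ω) :=
      fun v => measurable_numAlive.comp (b.meas v)
    have hVN : ∀ v : Label,
        Measurable fun ω => aliveIndicator (b.V v ω) * numAlive (b.disp v ω) :=
      fun v => (hV v).mul (hN v)
    calc ∫⁻ ω, b.ZR (n + 1) ω ∂P
        = ∑' v : {v : Label // v.length = n},
            ∫⁻ ω, aliveIndicator (b.V v ω) * numAlive (b.disp v ω) ∂P :=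
          (lintegral_congr (b.ZR_succ n)).trans (lintegral_tsum fun v => (hVN v.1).aemeasurable)
      _ = ∑' v : {v : Label // v.length = n},
            (∫⁻ ω, aliveIndicator (b.V v ω) ∂P) * ∫⁻ ω, b.ZR 1 ω ∂P := by
          refine tsum_congr fun v => ?_
          rw [← b.lintegral_numAlive_disp v]
          exact lintegral_mul_eq_lintegral_mul_lintegral_of_indepFun (hV v) (hN v)
            ((b.indepFun_V_disp v).comp measurable_aliveIndicator measurable_numAlive)
      _ = (∫⁻ ω, b.ZR n ω ∂P) * ∫⁻ ω, b.ZR 1 ω ∂P := by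
          rw [ENNReal.tsum_mul_right, ← lintegral_tsum (f := fun (v : {v : Label // v.length = n})
            ω => aliveIndicator (b.V v ω)) fun v => (hV v.1).aemeasurable]
          rfl
      _ = (∫⁻ ω, b.ZR 1 ω ∂P) ^ (n + 1) := by rw [ih, pow_succ]

lemma measure_ZR_ne_zero_le [IsProbabilityMeasure P] (n : ℕ) :
    P {ω | b.ZR n ω ≠ 0} ≤ (∫⁻ ω, b.ZR 1 ω ∂P) ^ n :=
  calc P {ω | b.ZR n ω ≠ 0} ≤ P {ω | 1 ≤ b.ZR n ω} :=
        measure_mono fun ω => one_le_numAlive_of_ne_zero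
    _ ≤ ∫⁻ ω, b.ZR n ω ∂P := by simpa using mul_meas_ge_le_lintegral (b.measurable_ZR n) 1
    _ = (∫⁻ ω, b.ZR 1 ω ∂P) ^ n := b.lintegral_ZR n

lemma measure_ZR_eq_top [IsProbabilityMeasure P] (hm : ∫⁻ ω, b.ZR 1 ω ∂P ≠ ⊤) (n : ℕ) :
    P {ω | b.ZR n ω = ⊤} = 0 :=
  measure_eq_top_of_lintegral_ne_top (b.measurable_ZR n).aemeasurable
    (by rw [b.lintegral_ZR]; exact ENNReal.pow_ne_top hm)

lemma measurable_firstGen : Measurable fun ω (j : ℕ) => b.V [j] ω :=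
  measurable_pi_lambda _ fun j => b.measurable_V [j]

lemma measurable_W1 (θ : ℝ) : Measurable (b.W1 θ) :=
  Measurable.tsum fun i => Measurable.ite (b.measurable_V [i] (measurableSet_singleton ⊥))
    measurable_const (measurable_eexp.comp ((b.measurable_V [i]).const_mul _))

def sizeBiasWeight (θ ψ : ℝ) (i : ℕ) (ω : Ω) : ℝ≥0∞ :=
  if b.V [i] ω = ⊥ then 0 else eexp ((θ : EReal) * b.V [i] ω - (ψ : EReal))

lemma measurable_sizeBiasWeight (θ ψ : ℝ) (i : ℕ) : Measurable (b.sizeBiasWeight θ ψ i) :=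
  Measurable.ite (b.measurable_V [i] (measurableSet_singleton ⊥)) measurable_const
    (measurable_eexp.comp (((b.measurable_V [i]).const_mul _).sub_const _))

/-- The law of `(b_k, w^{(k)})` along the spine, cf. `SpineSetup.sbLaw`. -/
def sizeBiased (θ ψ : ℝ) : Measure ((ℕ → EReal) × ℕ) :=
  Measure.sum fun i =>
    (P.withDensity (b.sizeBiasWeight θ ψ i)).map fun ω => (fun j => b.V [j] ω, i)

lemma lintegral_sizeBiased {θ ψ : ℝ} {f : (ℕ → EReal) × ℕ → ℝ≥0∞} (hf : Measurable f) :
    ∫⁻ p, f p ∂b.sizeBiased θ ψ = ∫⁻ ω, ∑' i : ℕ, (if b.V [i] ω = ⊥ then 0 else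
      eexp ((θ : EReal) * b.V [i] ω - (ψ : EReal)) * f (fun j => b.V [j] ω, i)) ∂P := by
  have hmap : ∀ i : ℕ, Measurable fun ω => ((fun j => b.V [j] ω, i) : (ℕ → EReal) × ℕ) :=
    fun i => b.measurable_firstGen.prodMk measurable_const
  have hterm : ∀ i : ℕ, Measurable fun ω => b.sizeBiasWeight θ ψ i ω * f (fun j => b.V [j] ω, i) :=
    fun i => (b.measurable_sizeBiasWeight θ ψ i).mul (hf.comp (hmap i))
  rw [sizeBiased, lintegral_sum_measure]
  calc ∑' i, ∫⁻ p, f p ∂(P.withDensity (b.sizeBiasWeight θ ψ i)).map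
        (fun ω => (fun j => b.V [j] ω, i))
      = ∑' i, ∫⁻ ω, b.sizeBiasWeight θ ψ i ω * f (fun j => b.V [j] ω, i) ∂P :=
        tsum_congr fun i => by
          rw [lintegral_map hf (hmap i)]
          exact lintegral_withDensity_eq_lintegral_mul _
            (b.measurable_sizeBiasWeight θ ψ i) (hf.comp (hmap i))
    _ = _ := by
        rw [← lintegral_tsum fun i => (hterm i).aemeasurable]
        refine lintegral_congr fun ω => tsum_congr fun i => ?_
        unfold sizeBiasWeight
        split_ifs <;> simp

lemma lintegral_sizeBiased_fst {θ ψ : ℝ} {f : (ℕ → EReal) → ℝ≥0∞} (hf : Measurable f) :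
    ∫⁻ p, f p.1 ∂b.sizeBiased θ ψ
      = ENNReal.ofReal (Real.exp (-ψ)) * ∫⁻ ω, b.W1 θ ω * f (fun j => b.V [j] ω) ∂P := by
  have hWf : Measurable fun ω => b.W1 θ ω * f (fun j => b.V [j] ω) :=
    (b.measurable_W1 θ).mul (hf.comp b.measurable_firstGen)
  rw [b.lintegral_sizeBiased (f := fun p => f p.1) (hf.comp measurable_fst),
    ← lintegral_const_mul _ hWf]
  refine lintegral_congr fun ω => ?_
  rw [W1, ← ENNReal.tsum_mul_right, ← ENNReal.tsum_mul_left]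
  refine tsum_congr fun i => ?_
  split_ifs
  · simp
  · rw [eexp_sub_coe]; ring

lemma isProbabilityMeasure_sizeBiased {θ ψ : ℝ} (hψ : b.Lap θ = ENNReal.ofReal (Real.exp ψ)) :
    IsProbabilityMeasure (b.sizeBiased θ ψ) := by
  constructor
  have h := b.lintegral_sizeBiased_fst (θ := θ) (ψ := ψ) (f := fun _ => 1) measurable_const
  simp only [lintegral_const, one_mul, mul_one] at h
  rw [h, show ∫⁻ ω, b.W1 θ ω ∂P = b.Lap θ from rfl, hψ, ← ENNReal.ofReal_mul (Real.exp_nonneg _),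
    ← Real.exp_add, neg_add_cancel, Real.exp_zero, ENNReal.ofReal_one]

/-- By `W log₊ Z ≤ W log₊ W + Z`, the `L log L` condition makes `log₊` of the size-biased family
size integrable. -/
lemma lintegral_plog_numAlive_sizeBiased_ne_top {θ : ℝ} (ψ : ℝ) (hL : b.LlogL θ)
    (hm : ∫⁻ ω, b.ZR 1 ω ∂P ≠ ⊤) :
    ∫⁻ p, plog (numAlive p.1) ∂b.sizeBiased θ ψ ≠ ⊤ := by
  rw [b.lintegral_sizeBiased_fst (f := fun g => plog (numAlive g))
    (measurable_plog.comp measurable_numAlive)]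
  simp only [← b.ZR_one]
  refine ENNReal.mul_ne_top ENNReal.ofReal_ne_top (ne_top_of_le_ne_top ?_
    (lintegral_mono fun ω => mul_plog_le (b.W1 θ ω) (b.ZR 1 ω)))
  rw [lintegral_add_right _ (b.measurable_ZR 1)]
  exact ENNReal.add_ne_top.2 ⟨hL.ne, hm⟩

end BRW

namespace SpineSetup

variable {P : Measure Ω} {θ ψ ψ' : ℝ} (s : SpineSetup Ω P θ ψ ψ')

def copySize (i k : ℕ) (ω : Ω) : ℝ≥0∞ :=
  numAlive fun u : {u : Label // u.length = k} => s.Vc i k u ω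

def stepMass (k : ℕ) (ω : Ω) : ℝ≥0∞ :=
  ∑' i, aliveIndicator (s.B k ω i) * s.copySize i k ω

lemma Dinf_univ_le (ω : Ω) : s.Dinf ω univ ≤ 1 + ∑' k, s.stepMass k ω := by
  have hcnt0 : cnt univ (0 : EReal) = 1 := by simp [cnt, ← EReal.coe_zero]
  rw [Dinf, hcnt0]
  gcongr with k
  refine ENNReal.tsum_le_tsum fun i => ?_
  rw [copySize, numAlive, ← ENNReal.tsum_mul_left]
  refine ENNReal.tsum_le_tsum fun u => ?_
  split_ifs
  · exact bot_le
  · exact cnt_univ_add_sub_le _ _ _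

def badEvent (k : ℕ) (a : ℝ≥0∞) : Set Ω :=
  {ω | a < numAlive (s.B k ω)} ∪
    ⋃ i, {ω | numAlive (s.B k ω) ≤ a ∧ s.B k ω i ≠ ⊥} ∩ {ω | s.copySize i k ω ≠ 0}

lemma stepMass_eq_zero_of_notMem {k : ℕ} {a : ℝ≥0∞} {ω : Ω} (h : ω ∉ s.badEvent k a) :
    s.stepMass k ω = 0 := by
  simp only [badEvent, mem_union, mem_iUnion, mem_inter_iff, mem_ofPred_eq, not_or, not_lt,
    not_exists, not_and, not_not] at h
  refine ENNReal.tsum_eq_zero.2 fun i => ?_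
  by_cases hi : s.B k ω i = ⊥
  · simp [aliveIndicator, hi]
  · rw [h.2 i ⟨h.1, hi⟩, mul_zero]

lemma stepMass_ne_top {k : ℕ} {ω : Ω} (hB : numAlive (s.B k ω) ≠ ⊤)
    (hcopy : ∀ i, s.copySize i k ω ≠ ⊤) : s.stepMass k ω ≠ ⊤ := by
  refine ENNReal.tsum_ne_top_of_support_finite ((finite_alive_of_numAlive_ne_top hB).subset
    fun i hi => ?_) fun i =>
      ENNReal.mul_ne_top (ne_top_of_le_ne_top ENNReal.one_ne_top (aliveIndicator_le_one _))
        (hcopy i)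
  intro hbot
  simp [aliveIndicator, hbot] at hi

lemma indepFun_spine_copy (i k : ℕ) :
    IndepFun (fun ω => (s.B k ω, s.W k ω)) (fun ω u => s.Vc i k u ω) P :=
  s.indepAll.indepFun (i := Sum.inl k) (j := Sum.inr (i, k)) Sum.inl_ne_inr

variable [IsProbabilityMeasure P]

lemma measure_spine_preimage_le (k : ℕ) {t : Set ((ℕ → EReal) × ℕ)} (ht : MeasurableSet t) :
    P ((fun ω => (s.B k ω, s.W k ω)) ⁻¹' t) ≤ s.sizeBiased θ ψ t :=
  have := s.isProbabilityMeasure_sizeBiased s.lapEq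
  measure_preimage_le_of_lintegral_comp_eq _
    (fun f hf => (s.sbLaw k f hf).trans (s.lintegral_sizeBiased hf).symm) ht

lemma measure_copy_preimage_le (i k : ℕ) {t : Set (Label → EReal)} (ht : MeasurableSet t) :
    P ((fun ω u => s.Vc i k u ω) ⁻¹' t) ≤ P ((fun ω u => s.V u ω) ⁻¹' t) := by
  have hV : Measurable fun ω (u : Label) => s.V u ω := measurable_pi_lambda _ s.measurable_V
  have := Measure.isProbabilityMeasure_map (μ := P) hV.aemeasurable
  exact (measure_preimage_le_of_lintegral_comp_eq _
    (fun f hf => (s.copyLaw i k f hf).trans (lintegral_map hf hV).symm) ht).trans_eq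
      (Measure.map_apply hV ht)

lemma measurable_numAlive_generation (k : ℕ) :
    Measurable fun g : Label → EReal => numAlive fun u : {u : Label // u.length = k} => g u :=
  measurable_numAlive.comp (measurable_pi_lambda _ fun u => measurable_pi_apply u.1)

lemma measure_copySize_ne_zero_le (i k : ℕ) :
    P {ω | s.copySize i k ω ≠ 0} ≤ (∫⁻ ω, s.ZR 1 ω ∂P) ^ k :=
  (s.measure_copy_preimage_le i k
    ((measurable_numAlive_generation k) (measurableSet_singleton 0)).compl).trans
      (s.measure_ZR_ne_zero_le k)

lemma measure_copySize_eq_top (hm : ∫⁻ ω, s.ZR 1 ω ∂P ≠ ⊤) (i k : ℕ) :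
    P {ω | s.copySize i k ω = ⊤} = 0 :=
  nonpos_iff_eq_zero.1 <| (s.measure_copy_preimage_le i k
    ((measurable_numAlive_generation k) (measurableSet_singleton ⊤))).trans_eq
      (s.measure_ZR_eq_top hm k)

lemma measure_numAlive_B_eq_top (hL : s.LlogL θ) (hm : ∫⁻ ω, s.ZR 1 ω ∂P ≠ ⊤) (k : ℕ) :
    P {ω | numAlive (s.B k ω) = ⊤} = 0 := by
  have hf : Measurable fun p : (ℕ → EReal) × ℕ => numAlive p.1 :=
    measurable_numAlive.comp measurable_fst
  have hν : s.sizeBiased θ ψ {p | numAlive p.1 = ⊤} = 0 :=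
    measure_mono_null (fun p (hp : numAlive p.1 = ⊤) => by simp [plog, hp])
      (measure_eq_top_of_lintegral_ne_top (measurable_plog.comp hf).aemeasurable
        (s.lintegral_plog_numAlive_sizeBiased_ne_top ψ hL hm))
  exact nonpos_iff_eq_zero.1
    ((s.measure_spine_preimage_le k (hf (measurableSet_singleton ⊤))).trans_eq hν)

lemma measure_badEvent_le (k : ℕ) (a : ℝ≥0∞) :
    P (s.badEvent k a) ≤ s.sizeBiased θ ψ {p | a < numAlive p.1} + a * (∫⁻ ω, s.ZR 1 ω ∂P) ^ k := by
  have hf : Measurable fun p : (ℕ → EReal) × ℕ => numAlive p.1 :=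
    measurable_numAlive.comp measurable_fst
  set S : ℕ → Set (ℕ → EReal) := fun i => {g | numAlive g ≤ a ∧ g i ≠ ⊥}
  have hS : ∀ i, MeasurableSet (S i) := fun i =>
    (measurableSet_le measurable_numAlive measurable_const).inter
      ((measurable_pi_apply i) (measurableSet_singleton ⊥)).compl
  have hsurv : MeasurableSet {g : Label → EReal |
      (numAlive fun u : {u : Label // u.length = k} => g u) ≠ 0} :=
    ((measurable_numAlive_generation k) (measurableSet_singleton 0)).compl
  refine (measure_union_le _ _).trans (add_le_add
    (s.measure_spine_preimage_le k (measurableSet_lt measurable_const hf)) ?_)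
  calc P (⋃ i, {ω | numAlive (s.B k ω) ≤ a ∧ s.B k ω i ≠ ⊥} ∩ {ω | s.copySize i k ω ≠ 0})
      ≤ ∑' i, s.sizeBiased θ ψ (Prod.fst ⁻¹' S i) * (∫⁻ ω, s.ZR 1 ω ∂P) ^ k :=
        (measure_iUnion_le _).trans (ENNReal.tsum_le_tsum fun i =>
          ((s.indepFun_spine_copy i k).measure_inter_preimage_eq_mul _ _
            (measurable_fst (hS i)) hsurv).trans_le
              (mul_le_mul' (s.measure_spine_preimage_le k (measurable_fst (hS i)))
                (s.measure_copySize_ne_zero_le i k)))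
    _ = (∑' i, (s.sizeBiased θ ψ).map Prod.fst (S i)) * (∫⁻ ω, s.ZR 1 ω ∂P) ^ k := by
        rw [ENNReal.tsum_mul_right]
        simp only [Measure.map_apply measurable_fst (hS _)]
    _ ≤ a * (∫⁻ ω, s.ZR 1 ω ∂P) ^ k := by
        have := s.isProbabilityMeasure_sizeBiased s.lapEq
        gcongr
        refine (tsum_measure_alive_le _ a).trans_eq ?_
        rw [Measure.map_apply measurable_fst MeasurableSet.univ, preimage_univ, measure_univ,
          mul_one]

lemma exists_tsum_measure_badEvent_ne_top (hL : s.LlogL θ) (hsub : ∫⁻ ω, s.ZR 1 ω ∂P < 1) :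
    ∃ a : ℕ → ℝ≥0∞, ∑' k, P (s.badEvent k (a k)) ≠ ⊤ := by
  have hm : ∫⁻ ω, s.ZR 1 ω ∂P ≠ ⊤ := (hsub.trans ENNReal.one_lt_top).ne
  have := s.isProbabilityMeasure_sizeBiased s.lapEq
  obtain ⟨r, hr, hrm⟩ := exists_one_lt_ofReal_mul_lt_one hsub
  refine ⟨fun k => ENNReal.ofReal (r ^ k), ne_top_of_le_ne_top ?_
    (ENNReal.tsum_le_tsum fun k => s.measure_badEvent_le k _)⟩
  rw [ENNReal.tsum_add]
  refine ENNReal.add_ne_top.2 ⟨tsum_measure_pow_lt_ne_top _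
    (measurable_numAlive.comp measurable_fst) (s.lintegral_plog_numAlive_sizeBiased_ne_top ψ hL hm)
    hr, ?_⟩
  simp only [ENNReal.ofReal_pow (zero_le_one.trans hr.le), ← mul_pow]
  exact (tsum_geometric_lt_top.2 hrm).ne

end SpineSetup

theorem subcritical_decoration_finite_general
    {Ω : Type} [MeasurableSpace Ω] {P : Measure Ω} [IsProbabilityMeasure P]
    {θ ψ ψ' : ℝ} (s : SpineSetup Ω P θ ψ ψ')
    (hL : s.toBRW.LlogL θ)
    (hsub : ∫⁻ ω, s.toBRW.ZR 1 ω ∂P < 1) :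
    P {ω | s.Dinf ω Set.univ < ⊤} = 1 := by
  have hm : ∫⁻ ω, s.toBRW.ZR 1 ω ∂P ≠ ⊤ := (hsub.trans ENNReal.one_lt_top).ne
  obtain ⟨a, ha⟩ := s.exists_tsum_measure_badEvent_ne_top hL hsub
  have hbad : ∀ᵐ ω ∂P, {k | ω ∈ s.badEvent k (a k)}.Finite := ae_finite_setOfPred_mem ha
  have hspine : ∀ᵐ ω ∂P, ∀ k, numAlive (s.B k ω) ≠ ⊤ := ae_all_iff.2 fun k =>
    measure_eq_zero_iff_ae_notMem.1 (s.measure_numAlive_B_eq_top hL hm k)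
  have hcopy : ∀ᵐ ω ∂P, ∀ k i, s.copySize i k ω ≠ ⊤ := ae_all_iff.2 fun k => ae_all_iff.2 fun i =>
    measure_eq_zero_iff_ae_notMem.1 (s.measure_copySize_eq_top hm i k)
  have hfin : ∀ᵐ ω ∂P, s.Dinf ω Set.univ < ⊤ := by
    filter_upwards [hbad, hspine, hcopy] with ω hb hB hc
    refine (s.Dinf_univ_le ω).trans_lt (ENNReal.add_lt_top.2 ⟨ENNReal.one_lt_top, ?_⟩)
    refine lt_top_iff_ne_top.2 (ENNReal.tsum_ne_top_of_support_finite (hb.subset fun k hk => ?_)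
      fun k => s.stepMass_ne_top (hB k) (hc k))
    by_contra h
    exact hk (s.stepMass_eq_zero_of_notMem h)
  have hfin' : {ω | s.Dinf ω Set.univ < ⊤} =ᵐ[P] (univ : Set Ω) := ae_eq_univ.2 (ae_iff.1 hfin)
  rw [measure_congr hfin', measure_univ]

/-- (Proposition 5.1) If the branching random walk is subcritical
(`E Z_1(ℝ) < 1`), `ψ(θ) < ∞`, (as3) holds and `E(Z_1(ℝ) log₊ Z_1(ℝ)) < ∞`, then the
decoration measure is a.s. finite. -/
theorem subcritical_decoration_finite
    {Ω : Type} [MeasurableSpace Ω] {P : Measure Ω} [IsProbabilityMeasure P]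
    {θ ψ ψ' : ℝ} (s : SpineSetup Ω P θ ψ ψ') (hθ : 0 < θ)
    (hL : s.toBRW.LlogL θ)
    (hsub : ∫⁻ ω, s.toBRW.ZR 1 ω ∂P < 1)
    (hZlog : ∫⁻ ω, s.toBRW.ZR 1 ω * plog (s.toBRW.ZR 1 ω) ∂P < ⊤) :
    P {ω | s.Dinf ω Set.univ < ⊤} = 1 :=
  subcritical_decoration_finite_general s hL hsub
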